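/- arXiv:2311.02217 — 8 statements merged into one kernel-verified Lean document; each statement's English description precedes it below -/
import Mathlib

section
/- Let r ≥ 1 and let c_0,...,c_r : ℤ → ℂ satisfy c_k(n) = 0 whenever (r+1) ∤ (n+k). Then the space of solutions x : ℤ → ℂ of Σ_{k=0}^r c_k(n) x(n+k) = 0 (for all n ∈ ℤ) is infinite-dimensional as a ℂ-vector space. -/
/-!
Since `c k n` vanishes unless `r + 1 ∣ n + k`, every sequence supported off the multiples of
`r + 1` kills each term of the equation. For `r ≥ 1` there are infinitely many non-multiples, and
the indicator sequences of these points are linearly independent solutions.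
-/

/-- `x` is a solution of the linear difference equation with coefficients `a 0, ..., a r`. -/
def IsSol (r : ℕ) (a : ℕ → ℤ → ℂ) (x : ℤ → ℂ) : Prop :=
  ∀ n : ℤ, ∑ k ∈ Finset.range (r + 1), a k n * x (n + k) = 0

/-- The space of solutions of the linear difference equation. -/
noncomputable def solSpace (r : ℕ) (a : ℕ → ℤ → ℂ) : Submodule ℂ (ℤ → ℂ) where
  carrier := {x | IsSol r a x}
  add_mem' := by
    intro x y hx hy n
    simp only [Pi.add_apply, mul_add, Finset.sum_add_distrib, hx n, hy n, add_zero]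
  zero_mem' := by intro n; simp
  smul_mem' := by
    intro c x hx n
    simp only [Pi.smul_apply, smul_eq_mul, mul_left_comm, ← Finset.mul_sum, hx n, mul_zero]

/-- Sequences vanishing on a set `s`. -/
noncomputable def vanishOn (s : Set ℤ) : Submodule ℂ (ℤ → ℂ) where
  carrier := {x | ∀ n ∈ s, x n = 0}
  add_mem' := by intro x y hx hy n hn; simp [hx n hn, hy n hn]
  zero_mem' := by intro n _; simp
  smul_mem' := by intro c x hx n hn; simp [hx n hn]

/-- A sequence is lacunary if the gaps between consecutive support elements are unbounded. -/
def Lacunary (x : ℤ → ℂ) : Prop :=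
  ∀ L : ℤ, ∃ i j : ℤ, x i ≠ 0 ∧ x j ≠ 0 ∧ i < j ∧ L < j - i ∧
    ∀ k : ℤ, i < k → k < j → x k = 0

theorem vanishOn_le_solSpace {r : ℕ} {a : ℕ → ℤ → ℂ} {s : Set ℤ}
    (ha : ∀ k ≤ r, ∀ n : ℤ, n + k ∉ s → a k n = 0) : vanishOn s ≤ solSpace r a := by
  intro x hx n
  refine Finset.sum_eq_zero fun k hk => ?_
  by_cases hks : n + k ∈ s
  · rw [hx _ hks, mul_zero]
  · rw [ha k (Finset.mem_range_succ_iff.mp hk) n hks, zero_mul]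

theorem not_finiteDimensional_vanishOn {s : Set ℤ} (hs : sᶜ.Infinite) :
    ¬ FiniteDimensional ℂ (vanishOn s) := by
  intro _
  let single (m : ↥sᶜ) : vanishOn s :=
    ⟨Pi.single m.1 1, fun _ hn => Pi.single_eq_of_ne (ne_of_mem_of_not_mem hn m.2) _⟩
  have hsingle : LinearIndependent ℂ single :=
    LinearIndependent.of_comp (vanishOn s).subtype <|
      (Pi.linearIndependent_single_one ℤ ℂ).comp _ Subtype.val_injective
  exact hs.not_finite (Set.finite_coe_iff.mp hsingle.finite)

theorem Int.infinite_setOf_not_dvd {d : ℤ} (hd : 1 < d) : {n : ℤ | ¬ d ∣ n}.Infinite := by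
  refine Set.Infinite.mono ?_ (Set.infinite_range_of_injective (f := fun k : ℤ => d * k + 1) ?_)
  · rintro _ ⟨k, rfl⟩ hdvd
    have := Int.le_of_dvd one_pos ((dvd_add_right (dvd_mul_right d k)).mp hdvd)
    omega
  · intro k l hkl
    exact mul_left_cancel₀ (by omega) (add_right_cancel hkl)

theorem example_infinite_dimensional (r : ℕ) (hr : 1 ≤ r) (c : ℕ → ℤ → ℂ)
    (hc : ∀ k ≤ r, ∀ n : ℤ, ¬ ((r : ℤ) + 1 ∣ n + k) → c k n = 0) :
    ¬ FiniteDimensional ℂ (solSpace r c) := by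
  intro hfin
  have hle : vanishOn {n | (r : ℤ) + 1 ∣ n} ≤ solSpace r c := vanishOn_le_solSpace hc
  have hinf : {n : ℤ | (r : ℤ) + 1 ∣ n}ᶜ.Infinite := Int.infinite_setOf_not_dvd (by omega)
  exact not_finiteDimensional_vanishOn hinf (Submodule.finiteDimensional_of_le hle)
end

section
/- Suppose the space of solutions of the linear difference equation Σ_{k=0}^r a_k(n) x(n+k) = 0 (for all n ∈ ℤ) is infinite-dimensional over ℂ. Then either the subspace of solutions whose support is contained in {n : n > r} is infinite-dimensional, or the subspace of solutions whose support is contained in {n : n < 0} is infinite-dimensional. -/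
set_option synthInstance.maxHeartbeats 1000000
set_option maxHeartbeats 1000000


lemma key_decomp (r : ℕ) (a : ℕ → ℤ → ℂ) (x : ℤ → ℂ) (hx : IsSol r a x)
    (h0 : ∀ m : ℤ, 0 ≤ m → m ≤ (r : ℤ) → x m = 0) :
    x ∈ (solSpace r a ⊓ vanishOn {n : ℤ | n ≤ (r : ℤ)}) ⊔
        (solSpace r a ⊓ vanishOn {n : ℤ | 0 ≤ n}) := by
  set xp : ℤ → ℂ := fun m => if (r : ℤ) < m then x m else 0 with hxp_def
  have hxp_sol : IsSol r a xp := by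
    intro n
    rcases le_or_gt n 0 with hn | hn
    · apply Finset.sum_eq_zero
      intro k hk
      have hk' : (k : ℤ) ≤ r := by
        have := Finset.mem_range.mp hk
        omega
      have : ¬ ((r : ℤ) < n + k) := by omega
      simp [hxp_def, this]
    · have : ∀ k ∈ Finset.range (r + 1), a k n * xp (n + k) = a k n * x (n + k) := by
        intro k hk
        have hk' : (k : ℤ) ≤ r := by
          have := Finset.mem_range.mp hk
          omega
        by_cases hc : (r : ℤ) < n + k
        · simp [hxp_def, hc]
        · have h1 : 0 ≤ n + (k : ℤ) := by omega
          have h2 : n + (k : ℤ) ≤ r := by omega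
          simp [hxp_def, hc, h0 _ h1 h2]
      rw [Finset.sum_congr rfl this]
      exact hx n
  have hx_sol' : (x : ℤ → ℂ) ∈ solSpace r a := hx
  have hxp_mem : xp ∈ solSpace r a ⊓ vanishOn {n : ℤ | n ≤ (r : ℤ)} := by
    refine ⟨hxp_sol, ?_⟩
    intro n hn
    have : ¬ ((r : ℤ) < n) := not_lt.mpr hn
    simp [hxp_def, this]
  have hxm_mem : x - xp ∈ solSpace r a ⊓ vanishOn {n : ℤ | 0 ≤ n} := by
    refine ⟨(solSpace r a).sub_mem hx_sol' hxp_sol, ?_⟩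
    intro n hn
    by_cases hc : (r : ℤ) < n
    · simp [hxp_def, hc]
    · have := h0 n hn (not_lt.mp hc)
      simp [hxp_def, hc, this]
  have : x = xp + (x - xp) := by abel
  rw [this]
  exact Submodule.add_mem_sup hxp_mem hxm_mem

/-- Lemma on rays -/
theorem ray_lemma (r : ℕ) (hr : 1 ≤ r) (a : ℕ → ℤ → ℂ)
    (h : ¬ FiniteDimensional ℂ (solSpace r a)) :
    ¬ FiniteDimensional ℂ ↥(solSpace r a ⊓ vanishOn {n : ℤ | n ≤ (r : ℤ)}) ∨
    ¬ FiniteDimensional ℂ ↥(solSpace r a ⊓ vanishOn {n : ℤ | 0 ≤ n}) := by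
  by_contra hc
  push_neg at hc
  obtain ⟨h1, h2⟩ := hc
  apply h
  set Wp := solSpace r a ⊓ vanishOn {n : ℤ | n ≤ (r : ℤ)} with hWp
  set Wm := solSpace r a ⊓ vanishOn {n : ℤ | 0 ≤ n} with hWm
  haveI : FiniteDimensional ℂ ↥(Wp ⊔ Wm) := Submodule.finiteDimensional_sup Wp Wm
  -- restriction map to the window [0, r]
  let ρ : ↥(solSpace r a) →ₗ[ℂ] (Fin (r + 1) → ℂ) :=
    { toFun := fun x i => x.1 (i : ℤ)
      map_add' := fun x y => rfl
      map_smul' := fun c x => rfl }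
  -- the kernel injects into Wp ⊔ Wm
  have hker : ∀ x : ↥(solSpace r a), x ∈ LinearMap.ker ρ → (x : ℤ → ℂ) ∈ Wp ⊔ Wm := by
    intro x hx
    apply key_decomp r a x.1 x.2
    intro m hm1 hm2
    have hmn : m.toNat < r + 1 := by omega
    have := congrFun (LinearMap.mem_ker.mp hx) ⟨m.toNat, hmn⟩
    simpa [ρ, Int.toNat_of_nonneg hm1] using this
  let f : ↥(LinearMap.ker ρ) →ₗ[ℂ] ↥(Wp ⊔ Wm) :=
    LinearMap.codRestrict (Wp ⊔ Wm)
      ((solSpace r a).subtype.comp (LinearMap.ker ρ).subtype)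
      (fun c => hker c.1 c.2)
  have hf : Function.Injective f := by
    intro u v huv
    have h' : (f u : ℤ → ℂ) = (f v : ℤ → ℂ) := congrArg Subtype.val huv
    exact Subtype.ext (Subtype.ext h')
  haveI : FiniteDimensional ℂ ↥(LinearMap.ker ρ) := FiniteDimensional.of_injective f hf
  -- rank–nullity
  rw [FiniteDimensional, ← IsNoetherian.iff_fg, IsNoetherian.iff_rank_lt_aleph0]
  rw [← LinearMap.rank_range_add_rank_ker ρ]
  apply Cardinal.add_lt_aleph0
  · exact Module.rank_lt_aleph0 ℂ ↥(LinearMap.range ρ)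
  · exact Module.rank_lt_aleph0 ℂ ↥(LinearMap.ker ρ)
end

section
/- Suppose the space W of solutions of Σ_{k=0}^r a_k(n) x(n+k) = 0 with support contained in ℤ_{≥ 0} is infinite-dimensional. Then there exists an index J > 0 and a nonzero solution of the equation whose support is contained in the finite interval [1, J]. -/
/-- Truncating a solution below a gap of length `r` yields a solution. -/
lemma trunc_isSol (r : ℕ) (a : ℕ → ℤ → ℂ) (x : ℤ → ℂ) (hx : IsSol r a x) (M : ℤ)
    (hgap : ∀ n : ℤ, M ≤ n → n < M + r → x n = 0) :
    IsSol r a (fun n => if n < M then x n else 0) := by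
  intro n
  by_cases hn : n < M
  · have he : ∀ k ∈ Finset.range (r + 1),
        a k n * (if ((n + (k : ℤ))) < M then x (n + k) else 0) = a k n * x (n + k) := by
      intro k hk
      have hkr : (k : ℤ) ≤ r := by
        exact_mod_cast Nat.lt_succ_iff.mp (Finset.mem_range.mp hk)
      by_cases hnk : (n + (k : ℤ)) < M
      · simp [hnk]
      · push_neg at hnk
        rw [if_neg (not_lt.mpr hnk), hgap _ hnk (by omega), mul_zero]
    simpa only [Finset.sum_congr rfl he] using hx n
  · push_neg at hn
    apply Finset.sum_eq_zero
    intro k _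
    have hk0 : ¬ (n + (k : ℤ)) < M := by
      have := Int.natCast_nonneg k
      omega
    simp [hk0]

/-- The linear map sending coefficients to the corresponding linear combination. -/
noncomputable def combo {m : ℕ} (x : Fin m → (ℤ → ℂ)) : (Fin m → ℂ) →ₗ[ℂ] (ℤ → ℂ) where
  toFun := fun c => ∑ i, c i • x i
  map_add' := by intro c d; simp [add_smul, Finset.sum_add_distrib]
  map_smul' := by intro t c; simp [smul_smul, Finset.smul_sum]

/-- Lemma on finite-support solutions -/
theorem interval_lemma (r : ℕ) (hr : 1 ≤ r) (a : ℕ → ℤ → ℂ)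
    (h : ¬ FiniteDimensional ℂ ↥(solSpace r a ⊓ vanishOn {n : ℤ | n < 0})) :
    ∃ J : ℤ, 0 < J ∧ ∃ x : ℤ → ℂ, IsSol r a x ∧ x ≠ 0 ∧
      ∀ n : ℤ, x n ≠ 0 → 1 ≤ n ∧ n ≤ J := by
  classical
  by_contra hcon
  push_neg at hcon
  set W := solSpace r a ⊓ vanishOn {n : ℤ | n < 0} with hW
  -- From the negated conclusion: any solution supported in [1, J] is zero.
  have hzero : ∀ J : ℤ, 0 < J → ∀ x : ℤ → ℂ, IsSol r a x →
      (∀ n : ℤ, x n ≠ 0 → 1 ≤ n ∧ n ≤ J) → x = 0 := by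
    intro J hJ x hs hsupp
    by_contra hx
    obtain ⟨n, hn1, hn2⟩ := hcon J hJ x hs hx
    obtain ⟨h1, h2⟩ := hsupp n hn1
    exact absurd h2 (not_le.mpr (hn2 h1))
  -- Key: a solution vanishing on negatives and at 0, with a gap of length r at [M, M+r),
  -- vanishes everywhere below M + r.
  have key : ∀ y : ℤ → ℂ, IsSol r a y → (∀ n : ℤ, n < 0 → y n = 0) → y 0 = 0 →
      ∀ M : ℤ, 2 ≤ M → (∀ n : ℤ, M ≤ n → n < M + r → y n = 0) →
      ∀ n : ℤ, n < M + r → y n = 0 := by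
    intro y hy hyneg hy0 M hM hgap n hn
    have htr := trunc_isSol r a y hy M hgap
    have hz : (fun n => if n < M then y n else 0) = 0 := by
      apply hzero (M - 1) (by omega) _ htr
      intro m hm
      by_cases hmM : m < M
      · simp only [if_pos hmM] at hm
        have hm0 : 0 ≤ m := by
          by_contra hneg
          exact hm (hyneg m (by omega))
        have hmne : m ≠ 0 := by
          intro he; rw [he] at hm; exact hm hy0
        exact ⟨by omega, by omega⟩
      · exact absurd (if_neg hmM) hm
    by_cases hnM : n < M
    · have := congrFun hz n
      simpa [if_pos hnM] using this
    · exact hgap n (by omega) hn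
  -- Get r + 2 linearly independent elements of W.
  have hrank : ((r + 2 : ℕ) : Cardinal) ≤ Module.rank ℂ W := by
    by_contra hlt
    push_neg at hlt
    have hfin : Module.rank ℂ W < Cardinal.aleph0 :=
      lt_trans hlt (Cardinal.nat_lt_aleph0 _)
    exact h (IsNoetherian.iff_fg.mp (IsNoetherian.iff_rank_lt_aleph0.mpr hfin))
  obtain ⟨f, hf⟩ := exists_linearIndependent_of_le_rank hrank
  set x : Fin (r + 2) → (ℤ → ℂ) := fun i => (f i : ℤ → ℂ) with hxdef
  have hx : LinearIndependent ℂ x := hf.map' W.subtype (Submodule.ker_subtype W)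
  have hxW : ∀ i, x i ∈ W := fun i => (f i).2
  have hxsol : ∀ i, IsSol r a (x i) := fun i => ((Submodule.mem_inf).mp (hxW i)).1
  have hxneg : ∀ i, ∀ n : ℤ, n < 0 → x i n = 0 := fun i n hn =>
    ((Submodule.mem_inf).mp (hxW i)).2 n hn
  -- Combinations lie in W.
  have hcomboW : ∀ c : Fin (r + 2) → ℂ, combo x c ∈ W := by
    intro c
    exact Submodule.sum_mem W (fun i _ => Submodule.smul_mem W _ (hxW i))
  -- The subspaces C M of coefficient vectors whose combination vanishes below M + r.
  set C : ℤ → Submodule ℂ (Fin (r + 2) → ℂ) :=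
    fun M => ⨅ s : {n : ℤ // n < M + r},
      LinearMap.ker ((LinearMap.proj s.1 : (ℤ → ℂ) →ₗ[ℂ] ℂ) ∘ₗ combo x) with hC
  have hCmem : ∀ (M : ℤ) (c : Fin (r + 2) → ℂ),
      c ∈ C M ↔ ∀ n : ℤ, n < M + r → combo x c n = 0 := by
    intro M c
    rw [hC]
    simp only [Submodule.mem_iInf, LinearMap.mem_ker, LinearMap.comp_apply,
      LinearMap.proj_apply]
    exact ⟨fun H n hn => H ⟨n, hn⟩, fun H s => H s.1 s.2⟩
  have hCanti : ∀ M M' : ℤ, M ≤ M' → C M' ≤ C M := by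
    intro M M' hMM c hc
    rw [hCmem] at hc ⊢
    intro n hn
    exact hc n (by omega)
  -- Each C M (M ≥ 2) is nonzero.
  have hCne : ∀ M : ℤ, 2 ≤ M → ∃ c : Fin (r + 2) → ℂ, c ∈ C M ∧ c ≠ 0 := by
    intro M hM
    -- points: 0 and M, M+1, ..., M+r-1
    set pts : Fin (r + 1) → ℤ := fun j => if j.val = 0 then 0 else M + j.val - 1 with hpts
    set ψ : (Fin (r + 2) → ℂ) →ₗ[ℂ] (Fin (r + 1) → ℂ) :=
      LinearMap.pi (fun j => (LinearMap.proj (pts j) : (ℤ → ℂ) →ₗ[ℂ] ℂ) ∘ₗ combo x) with hψ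
    have hker : LinearMap.ker ψ ≠ ⊥ := by
      intro hbot
      have hinj : Function.Injective ψ := LinearMap.ker_eq_bot.mp hbot
      have := LinearMap.finrank_le_finrank_of_injective hinj
      rw [Module.finrank_fin_fun, Module.finrank_fin_fun] at this
      omega
    obtain ⟨c, hcker, hcne⟩ := (Submodule.ne_bot_iff _).mp hker
    have hcv : ∀ j : Fin (r + 1), combo x c (pts j) = 0 := by
      intro j
      have := congrFun (LinearMap.mem_ker.mp hcker) j
      simpa [hψ, LinearMap.pi_apply] using this
    refine ⟨c, ?_, hcne⟩
    rw [hCmem]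
    -- combo x c is a solution, vanishes on negatives, at 0, and on [M, M+r)
    have hcW := hcomboW c
    have hcsol : IsSol r a (combo x c) := ((Submodule.mem_inf).mp hcW).1
    have hcneg : ∀ n : ℤ, n < 0 → combo x c n = 0 := fun n hn =>
      ((Submodule.mem_inf).mp hcW).2 n hn
    have hc0 : combo x c 0 = 0 := by
      have := hcv ⟨0, by omega⟩
      simpa [hpts] using this
    have hcgap : ∀ n : ℤ, M ≤ n → n < M + r → combo x c n = 0 := by
      intro n hn1 hn2
      have hlt : (n - M).toNat + 1 < r + 1 := by omega
      have := hcv ⟨(n - M).toNat + 1, hlt⟩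
      have hpt : pts ⟨(n - M).toNat + 1, hlt⟩ = n := by
        simp only [hpts]
        rw [if_neg (by simp)]
        push_cast [Int.toNat_of_nonneg (by omega : (0 : ℤ) ≤ n - M)]
        omega
      rwa [hpt] at this
    exact key (combo x c) hcsol hcneg hc0 M hM hcgap
  -- Stabilization of the decreasing sequence C (m + 2), m : ℕ.
  set D : ℕ → Submodule ℂ (Fin (r + 2) → ℂ) := fun m => C ((m : ℤ) + 2) with hD
  have hex : ∃ k : ℕ, ∃ m : ℕ, Module.finrank ℂ (D m) = k := ⟨_, 0, rfl⟩
  set k₀ := Nat.find hex with hk₀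
  obtain ⟨m₀, hm₀⟩ := Nat.find_spec hex
  have hmin : ∀ m : ℕ, k₀ ≤ Module.finrank ℂ (D m) := fun m =>
    Nat.find_min' hex ⟨m, rfl⟩
  have hstab : ∀ m : ℕ, m₀ ≤ m → D m = D m₀ := by
    intro m hm
    refine Submodule.eq_of_le_of_finrank_le (hCanti _ _ (by omega)) ?_
    rw [hm₀]
    exact hmin m
  obtain ⟨c, hcD, hcne⟩ := hCne ((m₀ : ℤ) + 2) (by omega)
  -- The combination vanishes everywhere, contradicting independence.
  have hzeroc : combo x c = 0 := by
    funext n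
    set m : ℕ := max m₀ n.toNat with hm
    have hcDm : c ∈ D m := by
      rw [hstab m (le_max_left _ _)]
      exact hcD
    have := (hCmem ((m : ℤ) + 2) c).mp hcDm n (by
      have h1 : (n.toNat : ℤ) ≤ (m : ℤ) := by exact_mod_cast le_max_right m₀ n.toNat
      have h2 : n ≤ (n.toNat : ℤ) := Int.self_le_toNat n
      omega)
    simpa using this
  have hcoef := Fintype.linearIndependent_iff.mp hx c
  have : ∀ i, c i = 0 := hcoef (by simpa [combo] using hzeroc)
  exact hcne (funext this)
end

section
/- Let x : ℤ → ℂ be a solution of Σ_{k=0}^r a_k(n) x(n+k) = 0 (for all n ∈ ℤ), and let i < j be indices such that x(i) = x(i+1) = ... = x(i+r) = 0 and x(j) = x(j+1) = ... = x(j+r) = 0. Then the truncated sequence x₀ defined by x₀(n) = x(n) for i + r < n < j and x₀(n) = 0 otherwise is also a solution of the same equation. -/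
theorem truncate_solution (r : ℕ) (hr : 1 ≤ r) (a : ℕ → ℤ → ℂ) (x : ℤ → ℂ)
    (hx : IsSol r a x) (i j : ℤ) (hij : i < j)
    (hi : ∀ k : ℕ, k ≤ r → x (i + k) = 0) (hj : ∀ k : ℕ, k ≤ r → x (j + k) = 0) :
    IsSol r a (fun n => if i + r < n ∧ n < j then x n else 0) := by
  intro n
  rcases le_or_gt n i with hni | hni
  · apply Finset.sum_eq_zero
    intro k hk
    have kr : (k : ℤ) ≤ r := by
      exact_mod_cast Nat.lt_succ_iff.mp (Finset.mem_range.mp hk)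
    have hc : ¬ (i + (r : ℤ) < n + k ∧ n + (k : ℤ) < j) := by omega
    simp only [hc, if_false, mul_zero]
  rcases le_or_gt j n with hnj | hnj
  · apply Finset.sum_eq_zero
    intro k hk
    have hc : ¬ (i + (r : ℤ) < n + k ∧ n + (k : ℤ) < j) := by omega
    simp only [hc, if_false, mul_zero]
  · have key : ∀ k ∈ Finset.range (r + 1),
        a k n * (if i + (r : ℤ) < n + k ∧ n + (k : ℤ) < j then x (n + k) else 0)
          = a k n * x (n + k) := by
      intro k hk
      have kr : (k : ℤ) ≤ r := by
        exact_mod_cast Nat.lt_succ_iff.mp (Finset.mem_range.mp hk)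
      by_cases hc : i + (r : ℤ) < n + k ∧ n + (k : ℤ) < j
      · rw [if_pos hc]
      · rw [if_neg hc]
        have h0 : x (n + k) = 0 := by
          rcases le_or_gt (n + (k : ℤ)) (i + r) with h1 | h1
          · have hm : n + (k : ℤ) = i + ((n + k - i).toNat : ℤ) := by omega
            rw [hm]; exact hi _ (by omega)
          · have hm : n + (k : ℤ) = j + ((n + k - j).toNat : ℤ) := by omega
            rw [hm]; exact hj _ (by omega)
        rw [h0, mul_zero]
    rw [Finset.sum_congr rfl key]
    exact hx n
end

section
/- If the linear difference equation Σ_{k=0}^r a_k(n) x(n+k) = 0 (for all n ∈ ℤ) admits a lacunary solution, then its solution space is infinite-dimensional over ℂ. -/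
theorem lacunary_implies_infinite_dim (r : ℕ) (hr : 1 ≤ r) (a : ℕ → ℤ → ℂ)
    (h : ∃ x : ℤ → ℂ, IsSol r a x ∧ Lacunary x) :
    ¬ FiniteDimensional ℂ (solSpace r a) := by
  obtain ⟨x, hx, hlac⟩ := h
  choose I J hI hJ hIJ hlen hgap using hlac
  -- uniqueness of right endpoint given left endpoint
  have huniq : ∀ L L', I L = I L' → J L = J L' := by
    intro L L' hII
    rcases lt_trichotomy (J L) (J L') with hlt | heq | hgt
    · exact absurd (hgap L' (J L) (hII ▸ hIJ L) hlt) (hJ L)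
    · exact heq
    · exact absurd (hgap L (J L') (hII.symm ▸ hIJ L') hgt) (hJ L')
  -- the sequence of gap lengths
  set q : ℕ → ℤ := fun m => Nat.rec (r : ℤ) (fun _ p => J p - I p) m with hq
  have hq0 : q 0 = (r : ℤ) := rfl
  have hqs : ∀ m, q (m + 1) = J (q m) - I (q m) := fun m => rfl
  have hmono : StrictMono q := strictMono_nat_of_lt_succ fun m => by
    rw [hqs]; exact hlen (q m)
  have hqr : ∀ m, (r : ℤ) ≤ q m := fun m => hq0 ▸ hmono.monotone (Nat.zero_le m)
  set ι : ℕ → ℤ := fun m => I (q m) with hι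
  have hιinj : Function.Injective ι := by
    intro m m' hmm
    have : q (m + 1) = q (m' + 1) := by
      rw [hqs, hqs, huniq (q m) (q m') hmm, show I (q m) = I (q m') from hmm]
    exact Nat.succ_injective (hmono.injective this)
  -- truncated sequences
  set y : ℕ → ℤ → ℂ := fun m n => if n ≤ ι m then x n else 0 with hy
  have hgapι : ∀ m k, ι m < k → k < J (q m) → x k = 0 := fun m => hgap (q m)
  have hlenι : ∀ m, (r : ℤ) < J (q m) - ι m := fun m => lt_of_le_of_lt (hqr m) (hlen (q m))
  have hsol : ∀ m, y m ∈ solSpace r a := by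
    intro m n
    by_cases hn : n ≤ ι m
    · rw [show (∑ k ∈ Finset.range (r + 1), a k n * y m (n + k))
          = ∑ k ∈ Finset.range (r + 1), a k n * x (n + k) from ?_]
      · exact hx n
      · refine Finset.sum_congr rfl fun k hk => ?_
        congr 1
        have hkr : (k : ℤ) ≤ (r : ℤ) := by
          have := Finset.mem_range.mp hk; omega
        show (if (n + (k : ℤ)) ≤ ι m then x (n + k) else 0) = x (n + k)
        split_ifs with hcase
        · rfl
        · exact (hgapι m (n + k) (by omega) (by have := hlenι m; omega)).symm
    · apply Finset.sum_eq_zero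
      intro k _
      have : y m (n + k) = 0 := by
        show (if (n + (k : ℤ)) ≤ ι m then x (n + k) else 0) = 0
        rw [if_neg (by omega)]
      rw [this, mul_zero]
  -- linear independence
  have li : LinearIndependent ℂ (fun m => (⟨y m, hsol m⟩ : solSpace r a)) := by
    apply LinearIndependent.of_comp (solSpace r a).subtype
    rw [linearIndependent_iff']
    intro s
    induction s using Finset.strongInduction with
    | _ s ih =>
      intro g hg m hm
      obtain ⟨b, hb, hmax⟩ := s.exists_max_image ι ⟨m, hm⟩
      have hval := congrFun hg (ι b)
      rw [Finset.sum_apply] at hval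
      have hgb : g b = 0 := by
        have hsum : ∑ i ∈ s, (g i • ((solSpace r a).subtype ∘ fun m => (⟨y m, hsol m⟩ : solSpace r a)) i) (ι b)
            = g b * x (ι b) := by
          rw [Finset.sum_eq_single b]
          · simp only [Pi.smul_apply, smul_eq_mul, Function.comp_apply, Submodule.coe_subtype]
            congr 1
            show (if ι b ≤ ι b then x (ι b) else 0) = x (ι b)
            rw [if_pos le_rfl]
          · intro i hi hib
            have h1 : ι i < ι b := lt_of_le_of_ne (hmax i hi) (fun e => hib (hιinj e))
            simp only [Pi.smul_apply, smul_eq_mul, Function.comp_apply, Submodule.coe_subtype]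
            have : y i (ι b) = 0 := by
              show (if ι b ≤ ι i then x (ι b) else 0) = 0
              rw [if_neg (by omega)]
            rw [this, mul_zero]
          · intro hb'; exact absurd hb hb'
        rw [hsum] at hval
        exact (mul_eq_zero.mp hval).resolve_right (hI (q b))
      by_cases hmb : m = b
      · rw [hmb]; exact hgb
      · refine ih (s.erase b) (Finset.erase_ssubset hb) g ?_ m (Finset.mem_erase.mpr ⟨hmb, hm⟩)
        rw [Finset.sum_erase _ (by rw [hgb, zero_smul])]
        exact hg
  intro hfd
  exact Module.Finite.not_linearIndependent_of_infinite _ li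
end

section
/- If the solution space of the linear difference equation Σ_{k=0}^r a_k(n) x(n+k) = 0 (for all n ∈ ℤ) is infinite-dimensional over ℂ, then the equation admits a lacunary solution. -/
section Aux

variable {r : ℕ} {a : ℕ → ℤ → ℂ}

lemma mem_solSpace {x : ℤ → ℂ} : x ∈ solSpace r a ↔ IsSol r a x := Iff.rfl

lemma mem_vanishOn {s : Set ℤ} {x : ℤ → ℂ} : x ∈ vanishOn s ↔ ∀ n ∈ s, x n = 0 := Iff.rfl

lemma vanishOn_anti {s t : Set ℤ} (h : s ⊆ t) : vanishOn t ≤ vanishOn s :=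
  fun _x hx n hn => hx n (h hn)

/-- Truncating a solution at a vanishing window of length `r` gives a solution. -/
lemma isSol_trunc {x : ℤ → ℂ} (hx : IsSol r a x) (s : ℤ)
    (hw : ∀ n : ℤ, s ≤ n → n < s + r → x n = 0) :
    IsSol r a (fun n => if n < s then x n else 0) := by
  intro n
  show (∑ k ∈ Finset.range (r + 1), a k n * (if n + (k : ℤ) < s then x (n + k) else 0)) = 0
  by_cases hn : n < s
  · have hcong : ∀ k ∈ Finset.range (r + 1),
        a k n * (if n + (k : ℤ) < s then x (n + k) else 0) = a k n * x (n + k) := by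
      intro k hk
      by_cases h2 : n + (k : ℤ) < s
      · simp [h2]
      · have hk' : (k : ℤ) ≤ r := by
          exact_mod_cast Nat.lt_succ_iff.mp (Finset.mem_range.mp hk)
        have hx0 : x (n + k) = 0 := hw _ (le_of_not_gt h2) (by linarith)
        simp [h2, hx0]
    rw [Finset.sum_congr rfl hcong]
    exact hx n
  · have hcong : ∀ k ∈ Finset.range (r + 1),
        a k n * (if n + (k : ℤ) < s then x (n + k) else 0) = 0 := by
      intro k _
      have hk0 : (0 : ℤ) ≤ (k : ℤ) := Int.natCast_nonneg k
      have : ¬ (n + (k : ℤ) < s) := by omega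
      simp [this]
    rw [Finset.sum_congr rfl hcong]
    simp

lemma exists_least_supp {u : ℤ → ℂ} (hne : ∃ n, u n ≠ 0) (M : ℤ) (hb : ∀ n, n < M → u n = 0) :
    ∃ t, u t ≠ 0 ∧ (∀ n, n < t → u n = 0) ∧ M ≤ t := by
  obtain ⟨t, ht, hleast⟩ := Int.exists_least_of_bdd (P := fun n => u n ≠ 0)
    ⟨M, fun z hz => by by_contra hcon; exact hz (hb z (lt_of_not_ge hcon))⟩ hne
  refine ⟨t, ht, fun n hn => ?_, ?_⟩
  · by_contra hcon
    exact absurd (hleast n hcon) (not_le.mpr hn)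
  · by_contra hcon
    exact ht (hb t (not_le.mp hcon))

set_option synthInstance.maxHeartbeats 1000000 in
/-- Key finite-codimension fact: intersecting with vanishing conditions on a finite set
preserves infinite-dimensionality. -/
lemma not_finiteDimensional_inf_vanishOn {W : Submodule ℂ (ℤ → ℂ)}
    (hW : ¬ FiniteDimensional ℂ W) (F : Finset ℤ) :
    ¬ FiniteDimensional ℂ ↥(W ⊓ vanishOn (F : Set ℤ)) := by
  intro hfin
  apply hW
  let f : (ℤ → ℂ) →ₗ[ℂ] (F → ℂ) :=
    { toFun := fun x j => x j
      map_add' := fun _ _ => rfl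
      map_smul' := fun _ _ => rfl }
  have hker : W ⊓ LinearMap.ker f = W ⊓ vanishOn (F : Set ℤ) := by
    ext x
    simp only [Submodule.mem_inf, LinearMap.mem_ker, mem_vanishOn]
    constructor
    · rintro ⟨h1, h2⟩
      exact ⟨h1, fun n hn => congrFun h2 ⟨n, hn⟩⟩
    · rintro ⟨h1, h2⟩
      exact ⟨h1, funext fun j => h2 j j.2⟩
  have h1 : (W.map f).FG := by
    have : FiniteDimensional ℂ ↥(W.map f) := inferInstance
    exact (Submodule.fg_iff_finiteDimensional _).mpr this
  have h2 : (W ⊓ LinearMap.ker f).FG := by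
    rw [hker]
    exact (Submodule.fg_iff_finiteDimensional _).mpr hfin
  exact (Submodule.fg_iff_finiteDimensional _).mp
    (Submodule.fg_of_fg_map_of_fg_inf_ker f h1 h2)

end Aux
section Glue

variable {r : ℕ} {a : ℕ → ℤ → ℂ}

/-- Gluing finitely-supported blobs lying arbitrarily far to the right into a lacunary
solution. -/
lemma glue
    (H : ∀ M : ℤ, ∃ (v : ℤ → ℂ) (lo hi : ℤ), IsSol r a v ∧ lo ≤ hi ∧ M ≤ lo ∧
      v lo ≠ 0 ∧ v hi ≠ 0 ∧ (∀ n, n < lo → v n = 0) ∧ (∀ n, hi < n → v n = 0)) :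
    ∃ x : ℤ → ℂ, IsSol r a x ∧ Lacunary x := by
  classical
  choose V LO HI hsol hlohi hMle hVlo hVhi hbelow habove using H
  let m : ℕ → ℤ := fun k => Nat.rec 0 (fun k mk => HI mk + k + r + 2) k
  have hm : ∀ k : ℕ, m (k + 1) = HI (m k) + k + r + 2 := fun _ => rfl
  set v : ℕ → ℤ → ℂ := fun k => V (m k) with hv
  set lo : ℕ → ℤ := fun k => LO (m k) with hlo
  set hi : ℕ → ℤ := fun k => HI (m k) with hhi
  have hsep : ∀ k : ℕ, hi k + k + r + 2 ≤ lo (k + 1) := by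
    intro k
    have h1 := hMle (m (k + 1))
    rw [hm k] at h1
    exact h1
  have hll : ∀ k, lo k ≤ hi k := fun k => hlohi (m k)
  have hstep : ∀ k : ℕ, hi k < lo (k + 1) := by
    intro k
    have h1 := hsep k
    have hk : (0 : ℤ) ≤ (k : ℤ) := Int.natCast_nonneg k
    have hrz : (0 : ℤ) ≤ (r : ℤ) := Int.natCast_nonneg r
    linarith
  have hordq : ∀ k l : ℕ, k < l → hi k + k + r + 2 ≤ lo l := by
    intro k l hkl
    induction l with
    | zero => omega
    | succ l ih =>
      rcases Nat.lt_succ_iff_lt_or_eq.mp hkl with hc | hc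
      · exact (ih hc).trans ((hll l).trans (hstep l).le)
      · subst hc; exact hsep k
  have hord : ∀ k l : ℕ, k < l → hi k < lo l := by
    intro k l hkl
    have h1 := hordq k l hkl
    have hk : (0 : ℤ) ≤ (k : ℤ) := Int.natCast_nonneg k
    have hrz : (0 : ℤ) ≤ (r : ℤ) := Int.natCast_nonneg r
    linarith
  have himono : ∀ k l : ℕ, k ≤ l → hi k ≤ hi l := by
    intro k l hkl
    rcases Nat.lt_or_ge k l with hc | hc
    · exact ((hord k l hc).trans_le (hll l)).le
    · have : k = l := le_antisymm hkl hc
      subst this; rfl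
  have hlomono : ∀ k l : ℕ, k ≤ l → lo k ≤ lo l := by
    intro k l hkl
    rcases Nat.lt_or_ge k l with hc | hc
    · exact ((hll k).trans_lt (hord k l hc)).le
    · have : k = l := le_antisymm hkl hc
      subst this; rfl
  have hsupp : ∀ (k : ℕ) (n : ℤ), v k n ≠ 0 → lo k ≤ n ∧ n ≤ hi k := by
    intro k n hn
    constructor
    · by_contra hcon; exact hn (hbelow (m k) n (not_le.mp hcon))
    · by_contra hcon; exact hn (habove (m k) n (not_le.mp hcon))
  have huniq : ∀ (k l : ℕ) (n : ℤ), v k n ≠ 0 → v l n ≠ 0 → k = l := by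
    intro k l n hk hl
    rcases lt_trichotomy k l with hc | hc | hc
    · exfalso
      have h1 := (hsupp k n hk).2
      have h2 := (hsupp l n hl).1
      exact absurd (hord k l hc) (by linarith)
    · exact hc
    · exfalso
      have h1 := (hsupp l n hl).2
      have h2 := (hsupp k n hk).1
      exact absurd (hord l k hc) (by linarith)
  set z : ℤ → ℂ := fun n => if h : ∃ k, v k n ≠ 0 then v h.choose n else 0 with hz
  have hz1 : ∀ (k : ℕ) (n : ℤ), v k n ≠ 0 → z n = v k n := by
    intro k n h
    have hex : ∃ k, v k n ≠ 0 := ⟨k, h⟩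
    have : z n = v hex.choose n := by rw [hz]; exact dif_pos hex
    rw [this, huniq hex.choose k n hex.choose_spec h]
  have hz0 : ∀ n : ℤ, (∀ k, v k n = 0) → z n = 0 := by
    intro n h
    have hex : ¬ ∃ k, v k n ≠ 0 := by push_neg; exact h
    rw [hz]; exact dif_neg hex
  have hz2 : ∀ (k : ℕ) (n : ℤ), (∀ l, l ≠ k → v l n = 0) → z n = v k n := by
    intro k n h
    by_cases hk : v k n = 0
    · have hall : ∀ l, v l n = 0 := by
        intro l
        by_cases hl : l = k
        · subst hl; exact hk
        · exact h l hl
      rw [hz0 n hall, hk]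
    · exact hz1 k n hk
  refine ⟨z, ?_, ?_⟩
  · -- z is a solution
    intro n
    by_cases hex : ∃ (k : ℕ) (mm : ℤ), n ≤ mm ∧ mm ≤ n + r ∧ v k mm ≠ 0
    · obtain ⟨k₀, m₀, hm₀1, hm₀2, hm₀⟩ := hex
      have hm₀s := hsupp k₀ m₀ hm₀
      have hkey : ∀ j ∈ Finset.range (r + 1), a j n * z (n + (j : ℤ)) = a j n * v k₀ (n + j) := by
        intro j hj
        have hjr : (j : ℤ) ≤ r := by
          exact_mod_cast Nat.lt_succ_iff.mp (Finset.mem_range.mp hj)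
        have hj0 : (0 : ℤ) ≤ (j : ℤ) := Int.natCast_nonneg j
        rw [hz2 k₀ (n + j)]
        intro l hl
        by_contra hvl
        have h1 := hsupp l _ hvl
        rcases lt_or_gt_of_ne hl with hc | hc
        · have h3 := hordq l k₀ hc
          have hl0 : (0 : ℤ) ≤ (l : ℤ) := Int.natCast_nonneg l
          have hr0 : (0 : ℤ) ≤ (r : ℤ) := Int.natCast_nonneg r
          linarith [h1.2, hm₀s.1]
        · have h3 := hordq k₀ l hc
          have hk0 : (0 : ℤ) ≤ (k₀ : ℤ) := Int.natCast_nonneg k₀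
          have hr0 : (0 : ℤ) ≤ (r : ℤ) := Int.natCast_nonneg r
          linarith [h1.1, hm₀s.2]
      rw [Finset.sum_congr rfl hkey]
      exact hsol (m k₀) n
    · push_neg at hex
      apply Finset.sum_eq_zero
      intro j hj
      have hjr : (j : ℤ) ≤ r := by
        exact_mod_cast Nat.lt_succ_iff.mp (Finset.mem_range.mp hj)
      have hj0 : (0 : ℤ) ≤ (j : ℤ) := Int.natCast_nonneg j
      have : z (n + j) = 0 := hz0 _ (fun k => hex k (n + j) (by linarith) (by linarith))
      rw [this, mul_zero]
  · -- z is lacunary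
    intro L
    set k : ℕ := L.toNat with hk
    have hLk : L ≤ (k : ℤ) := Int.self_le_toNat L
    refine ⟨hi k, lo (k + 1), ?_, ?_, hstep k, ?_, ?_⟩
    · rw [hz1 k (hi k) (hVhi (m k))]; exact hVhi (m k)
    · rw [hz1 (k + 1) (lo (k + 1)) (hVlo (m (k + 1)))]; exact hVlo (m (k + 1))
    · have h1 := hsep k
      have hr0 : (0 : ℤ) ≤ (r : ℤ) := Int.natCast_nonneg r
      linarith
    · intro kk h1 h2
      apply hz0
      intro l
      by_contra hvl
      have hs := hsupp l kk hvl
      rcases Nat.lt_or_ge k l with hc | hc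
      · have : lo (k + 1) ≤ lo l := hlomono (k + 1) l hc
        linarith [hs.1]
      · have : hi l ≤ hi k := himono l k hc
        linarith [hs.2]
end Glue
section Blob

variable {r : ℕ} {a : ℕ → ℤ → ℂ}

/-- If there are nonzero solutions supported arbitrarily far to the right, then there are
nonzero *finitely supported* solutions arbitrarily far to the right. -/
lemma blob
    (hR : ∀ P : ℤ, ∃ u : ℤ → ℂ, IsSol r a u ∧ (∀ n, n < P → u n = 0) ∧ u ≠ 0) :
    ∀ M : ℤ, ∃ (v : ℤ → ℂ) (lo hi : ℤ), IsSol r a v ∧ lo ≤ hi ∧ M ≤ lo ∧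
      v lo ≠ 0 ∧ v hi ≠ 0 ∧ (∀ n, n < lo → v n = 0) ∧ (∀ n, hi < n → v n = 0) := by
  classical
  have hR' : ∀ P : ℤ, ∃ (u : ℤ → ℂ) (t : ℤ), IsSol r a u ∧ u t ≠ 0 ∧
      (∀ n, n < t → u n = 0) ∧ P ≤ t := by
    intro P
    obtain ⟨u, hsol, hvan, hne⟩ := hR P
    have hne' : ∃ n, u n ≠ 0 := by
      by_contra hcon
      push_neg at hcon
      exact hne (funext hcon)
    obtain ⟨t, ht, hlt, hPt⟩ := exists_least_supp hne' P hvan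
    exact ⟨u, t, hsol, ht, hlt, hPt⟩
  choose U T hUsol hUne hUb hT using hR'
  intro M
  -- echelon sequence
  let p : ℕ → ℤ := fun k => Nat.rec M (fun _ pk => T pk + 1) k
  have hp : ∀ k : ℕ, p (k + 1) = T (p k) + 1 := fun _ => rfl
  set t : ℕ → ℤ := fun k => T (p k) with htdef
  set u : ℕ → ℤ → ℂ := fun k => U (p k) with hudef
  have htlt : ∀ k : ℕ, t k < t (k + 1) := by
    intro k
    have h1 := hT (p (k + 1))
    rw [hp k] at h1
    exact lt_of_lt_of_le (by linarith) h1
  have htmono : StrictMono t := strictMono_nat_of_lt_succ htlt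
  have htM : ∀ k, M ≤ t k := by
    intro k
    have h0 : M ≤ t 0 := hT (p 0)
    exact h0.trans (htmono.monotone (Nat.zero_le k))
  set s : ℤ := t r + 1 with hs
  -- window vectors
  set w : Fin (r + 1) → (Fin r → ℂ) := fun i j => u i (s + (j : ℤ)) with hw
  have hdep : ¬ LinearIndependent ℂ w := by
    intro hli
    have hcard := hli.fintype_card_le_finrank
    rw [Module.finrank_fin_fun, Fintype.card_fin] at hcard
    omega
  obtain ⟨g, hgsum, i₀, hgi₀⟩ := Fintype.not_linearIndependent_iff.mp hdep
  set x : ℤ → ℂ := fun n => ∑ i : Fin (r + 1), g i * u i n with hxdef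
  have hxsol : IsSol r a x := by
    rw [← mem_solSpace]
    have hxe : x = ∑ i : Fin (r + 1), g i • (u i) := by
      funext n
      rw [hxdef]
      simp [Finset.sum_apply]
    rw [hxe]
    exact Submodule.sum_mem _ (fun i _ => Submodule.smul_mem _ _ (mem_solSpace.mpr (hUsol _)))
  -- least index with nonzero coefficient
  set Sg : Finset (Fin (r + 1)) := Finset.univ.filter (fun i => g i ≠ 0) with hSg
  have hSgne : Sg.Nonempty := ⟨i₀, by simp [hSg, hgi₀]⟩
  set k₀ : Fin (r + 1) := Sg.min' hSgne with hk₀def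
  have hk₀ : g k₀ ≠ 0 := (Finset.mem_filter.mp (Sg.min'_mem hSgne)).2
  have hk₀le : ∀ i, g i ≠ 0 → k₀ ≤ i := fun i hi => Sg.min'_le i (by simp [hSg, hi])
  have hub : ∀ (i : Fin (r + 1)) (n : ℤ), n < t i → u i n = 0 := fun i n hn => hUb (p i) n hn
  have hxval : x (t k₀) = g k₀ * u k₀ (t k₀) := by
    rw [hxdef]
    apply Fintype.sum_eq_single k₀
    intro i hi
    by_cases hgi : g i = 0
    · rw [hgi, zero_mul]
    · have hlt : k₀ < i := lt_of_le_of_ne (hk₀le i hgi) (Ne.symm hi)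
      have : t k₀ < t i := htmono (by exact_mod_cast hlt)
      rw [hub i _ this, mul_zero]
  have hxne : x (t k₀) ≠ 0 := by
    rw [hxval]
    exact mul_ne_zero hk₀ (hUne (p k₀))
  have hxbelow : ∀ n, n < t k₀ → x n = 0 := by
    intro n hn
    rw [hxdef]
    apply Finset.sum_eq_zero
    intro i _
    by_cases hgi : g i = 0
    · rw [hgi, zero_mul]
    · have hle : t k₀ ≤ t i := htmono.monotone (by exact_mod_cast hk₀le i hgi)
      rw [hub i n (by linarith), mul_zero]
  have hxwin : ∀ n : ℤ, s ≤ n → n < s + r → x n = 0 := by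
    intro n h1 h2
    have hjlt : (n - s).toNat < r := by omega
    have hjval : n = s + ((⟨(n - s).toNat, hjlt⟩ : Fin r) : ℤ) := by
      simp only []
      omega
    have hcf := congrFun hgsum ⟨(n - s).toNat, hjlt⟩
    rw [hxdef, hjval]
    simpa [hw, Finset.sum_apply] using hcf
  -- truncate
  set v : ℤ → ℂ := fun n => if n < s then x n else 0 with hvdef
  have hvsol : IsSol r a v := isSol_trunc hxsol s hxwin
  have hk₀r : t k₀ < s := by
    have : t (k₀ : ℕ) ≤ t r := htmono.monotone (Nat.lt_succ_iff.mp k₀.isLt)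
    omega
  have hvlo : v (t k₀) ≠ 0 := by
    rw [hvdef]
    simpa [hk₀r] using hxne
  have hvbelow : ∀ n, n < t k₀ → v n = 0 := by
    intro n hn
    rw [hvdef]
    by_cases hns : n < s
    · simp [hns, hxbelow n hn]
    · simp [hns]
  have hvbdd : ∀ n : ℤ, v n ≠ 0 → n ≤ s := by
    intro n hn
    by_contra hcon
    apply hn
    rw [hvdef]
    simp [show ¬ n < s by omega]
  obtain ⟨hi', hhi1, hhi2⟩ := Int.exists_greatest_of_bdd (P := fun n => v n ≠ 0)
    ⟨s, hvbdd⟩ ⟨t k₀, hvlo⟩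
  refine ⟨v, t k₀, hi', hvsol, hhi2 _ hvlo, htM _, hvlo, hhi1, hvbelow, ?_⟩
  intro n hn
  by_contra hcon
  exact absurd (hhi2 n hcon) (by omega)

end Blob

section MainRight

variable {r : ℕ} {a : ℕ → ℤ → ℂ}

lemma main_right
    (hR : ∀ P : ℤ, ¬ FiniteDimensional ℂ ↥(solSpace r a ⊓ vanishOn {n : ℤ | n < P})) :
    ∃ x : ℤ → ℂ, IsSol r a x ∧ Lacunary x := by
  apply glue
  apply blob
  intro P
  have hbot : (solSpace r a ⊓ vanishOn {n : ℤ | n < P}) ≠ ⊥ := by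
    intro hb
    apply hR P
    rw [hb]
    infer_instance
  obtain ⟨x, hx, hxne⟩ := (Submodule.ne_bot_iff _).mp hbot
  exact ⟨x, hx.1, fun n hn => hx.2 n hn, hxne⟩

end MainRight
section Reflect

/-- Reflected coefficient system. -/
def reflCoeff (r : ℕ) (a : ℕ → ℤ → ℂ) : ℕ → ℤ → ℂ := fun k m => a (r - k) (-m - r)

lemma isSol_reflect {r : ℕ} {a : ℕ → ℤ → ℂ} {x : ℤ → ℂ} (hx : IsSol r a x) :
    IsSol r (reflCoeff r a) (fun n => x (-n)) := by
  intro m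
  show (∑ k ∈ Finset.range (r + 1), reflCoeff r a k m * x (-(m + (k : ℤ)))) = 0
  have h1 : ∀ k ∈ Finset.range (r + 1),
      reflCoeff r a k m * x (-(m + (k : ℤ))) =
        (fun j : ℕ => a j (-m - r) * x ((-m - r) + (j : ℤ))) (r - k) := by
    intro k hk
    have hk' : k ≤ r := Nat.lt_succ_iff.mp (Finset.mem_range.mp hk)
    have hcast : ((r - k : ℕ) : ℤ) = (r : ℤ) - (k : ℤ) := by
      omega
    simp only [reflCoeff]
    congr 1
    congr 1
    rw [hcast]
    ring
  rw [Finset.sum_congr rfl h1]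
  have h2 := Finset.sum_range_reflect
    (fun j : ℕ => a j (-m - r) * x ((-m - r) + (j : ℤ))) (r + 1)
  simp only [Nat.add_sub_cancel] at h2
  rw [h2]
  exact hx (-m - r)

lemma isSol_coeff_congr {r : ℕ} {a b : ℕ → ℤ → ℂ}
    (hab : ∀ k ≤ r, ∀ m : ℤ, a k m = b k m) {x : ℤ → ℂ} (hx : IsSol r a x) : IsSol r b x := by
  intro n
  rw [← hx n]
  apply Finset.sum_congr rfl
  intro k hk
  rw [hab k (Nat.lt_succ_iff.mp (Finset.mem_range.mp hk))]

lemma isSol_reflect_back {r : ℕ} {a : ℕ → ℤ → ℂ} {y : ℤ → ℂ}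
    (hy : IsSol r (reflCoeff r a) y) : IsSol r a (fun n => y (-n)) := by
  have h1 := isSol_reflect hy
  apply isSol_coeff_congr (a := reflCoeff r (reflCoeff r a)) ?_ h1
  intro k hk m
  simp only [reflCoeff]
  rw [Nat.sub_sub_self hk]
  congr 1
  ring

lemma lacunary_reflect {y : ℤ → ℂ} (hy : Lacunary y) : Lacunary (fun n => y (-n)) := by
  intro L
  obtain ⟨i, j, hi, hj, hij, hgap, hbetween⟩ := hy L
  refine ⟨-j, -i, by simpa using hj, by simpa using hi, by omega, by omega, ?_⟩
  intro k h1 h2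
  show y (-k) = 0
  exact hbetween (-k) (by omega) (by omega)

end Reflect

section Final

variable {r : ℕ} {a : ℕ → ℤ → ℂ}

lemma dichotomy (hr : 1 ≤ r) (h : ¬ FiniteDimensional ℂ (solSpace r a))
    (P₀ : ℤ) (hP₀ : FiniteDimensional ℂ ↥(solSpace r a ⊓ vanishOn {n : ℤ | n < P₀})) :
    ∀ Q : ℤ, ¬ FiniteDimensional ℂ ↥(solSpace r a ⊓ vanishOn {n : ℤ | Q ≤ n}) := by
  intro Q hQfin
  set A : ℤ := min Q P₀ with hA
  set B : ℤ := max Q P₀ + r with hB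
  have hAQ : A ≤ Q := min_le_left _ _
  have hPB : P₀ ≤ B + 1 := by
    have : P₀ ≤ max Q P₀ := le_max_right _ _
    have hr0 : (0 : ℤ) ≤ (r : ℤ) := Int.natCast_nonneg r
    omega
  have hAB : A + (r : ℤ) ≤ B := by
    have : A ≤ max Q P₀ := by
      rw [hA]
      exact (min_le_left _ _).trans (le_max_left _ _)
    omega
  have hLA : FiniteDimensional ℂ ↥(solSpace r a ⊓ vanishOn {n : ℤ | A ≤ n}) := by
    haveI := hQfin
    apply Submodule.finiteDimensional_of_le (S₂ := solSpace r a ⊓ vanishOn {n : ℤ | Q ≤ n})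
    exact inf_le_inf_left _ (vanishOn_anti (fun n hn => hAQ.trans hn))
  have hRB : FiniteDimensional ℂ ↥(solSpace r a ⊓ vanishOn {n : ℤ | n < B + 1}) := by
    haveI := hP₀
    apply Submodule.finiteDimensional_of_le (S₂ := solSpace r a ⊓ vanishOn {n : ℤ | n < P₀})
    exact inf_le_inf_left _ (vanishOn_anti (fun n hn => lt_of_lt_of_le hn hPB))
  have hKle : solSpace r a ⊓ vanishOn ((Finset.Icc A B : Finset ℤ) : Set ℤ) ≤
      (solSpace r a ⊓ vanishOn {n : ℤ | A ≤ n}) ⊔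
        (solSpace r a ⊓ vanishOn {n : ℤ | n < B + 1}) := by
    intro x hx
    have hxs : IsSol r a x := hx.1
    have hxv : ∀ n : ℤ, A ≤ n → n ≤ B → x n = 0 := by
      intro n h1 h2
      exact hx.2 n (by simp [Finset.mem_Icc]; omega)
    set xl : ℤ → ℂ := fun n => if n < A then x n else 0 with hxl
    have hxlsol : IsSol r a xl :=
      isSol_trunc hxs A (fun n h1 h2 => hxv n h1 (by omega))
    have hxlmem : xl ∈ solSpace r a ⊓ vanishOn {n : ℤ | A ≤ n} := by
      refine ⟨hxlsol, fun n hn => ?_⟩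
      have : ¬ n < A := not_lt.mpr hn
      simp [hxl, this]
    have hxrsol : x - xl ∈ solSpace r a :=
      Submodule.sub_mem _ (mem_solSpace.mpr hxs) (mem_solSpace.mpr hxlsol)
    have hxrmem : x - xl ∈ solSpace r a ⊓ vanishOn {n : ℤ | n < B + 1} := by
      refine ⟨hxrsol, fun n hn => ?_⟩
      show x n - xl n = 0
      by_cases hc : n < A
      · simp [hxl, hc]
      · have h2 : x n = 0 := hxv n (not_lt.mp hc) (by simpa using Int.lt_add_one_iff.mp hn)
        simp [hxl, hc, h2]
    have hxeq : x = xl + (x - xl) := by ring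
    rw [hxeq]
    exact Submodule.add_mem _ (Submodule.mem_sup_left hxlmem) (Submodule.mem_sup_right hxrmem)
  have hKnot := not_finiteDimensional_inf_vanishOn h (Finset.Icc A B)
  apply hKnot
  haveI := hLA
  haveI := hRB
  exact Submodule.finiteDimensional_of_le hKle

end Final

theorem infinite_dim_implies_lacunary (r : ℕ) (hr : 1 ≤ r) (a : ℕ → ℤ → ℂ)
    (h : ¬ FiniteDimensional ℂ (solSpace r a)) :
    ∃ x : ℤ → ℂ, IsSol r a x ∧ Lacunary x := by
  classical
  by_cases hcase : ∀ P : ℤ, ¬ FiniteDimensional ℂ ↥(solSpace r a ⊓ vanishOn {n : ℤ | n < P})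
  · exact main_right hcase
  · push_neg at hcase
    obtain ⟨P₀, hP₀⟩ := hcase
    have hL := dichotomy hr h P₀ hP₀
    -- pass to the reflected system
    set b : ℕ → ℤ → ℂ := reflCoeff r a with hb
    have hRb : ∀ P : ℤ, ¬ FiniteDimensional ℂ ↥(solSpace r b ⊓ vanishOn {n : ℤ | n < P}) := by
      intro P hfin
      apply hL (1 - P)
      haveI := hfin
      let Φ : ↥(solSpace r a ⊓ vanishOn {n : ℤ | 1 - P ≤ n}) →ₗ[ℂ]
          ↥(solSpace r b ⊓ vanishOn {n : ℤ | n < P}) :=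
        { toFun := fun x => ⟨fun n => x.1 (-n),
            ⟨mem_solSpace.mpr (isSol_reflect (mem_solSpace.mp x.2.1)),
              fun n hn => x.2.2 (-n) (by simp at hn ⊢; omega)⟩⟩
          map_add' := fun x y => rfl
          map_smul' := fun c x => rfl }
      have hinj : Function.Injective Φ := by
        intro x y hxy
        apply Subtype.ext
        funext n
        have h2 : x.1 (-(-n)) = y.1 (-(-n)) := congrFun (congrArg Subtype.val hxy) (-n)
        simpa using h2
      exact FiniteDimensional.of_injective Φ hinj
    obtain ⟨y, hysol, hylac⟩ := main_right hRb
    exact ⟨fun n => y (-n), isSol_reflect_back hysol, lacunary_reflect hylac⟩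
end

section
/- For a linear difference equation Σ_{k=0}^r a_k(n) x(n+k) = 0 (for all n ∈ ℤ) with arbitrary sequence coefficients a_0,...,a_r : ℤ → ℂ, the solution space is infinite-dimensional over ℂ if and only if the equation has a lacunary solution. -/
open Set Function

theorem linearIndependent_of_isGreatest_support {ι α K : Type*} [LinearOrder α] [Ring K]
    [NoZeroDivisors K] {v : ι → α → K} {top : ι → α} (htop : Injective top)
    (hv : ∀ i, IsGreatest (support (v i)) (top i)) : LinearIndependent K v := by
  classical
  rw [linearIndependent_iff']
  intro s g hsum
  by_contra! h
  obtain ⟨i, hi, hgi⟩ := h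
  obtain ⟨i₀, hi₀, hmax⟩ := (s.filter (g · ≠ 0)).exists_max_image top ⟨i, by simp [hi, hgi]⟩
  rw [Finset.mem_filter] at hi₀
  have hsum₀ := congrFun hsum (top i₀)
  rw [Finset.sum_apply, Finset.sum_eq_single_of_mem i₀ hi₀.1] at hsum₀
  · exact mul_ne_zero hi₀.2 (hv i₀).1 hsum₀
  · intro j hj hne
    by_cases hgj : g j = 0
    · simp [hgj]
    · have hlt : top j < top i₀ :=
        (hmax j (Finset.mem_filter.mpr ⟨hj, hgj⟩)).lt_of_ne (htop.ne hne)
      simp [notMem_support.mp fun h => hlt.not_ge ((hv j).2 h)]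

theorem Submodule.exists_forall_le_of_antitone {ι K V : Type*} [Preorder ι] [IsDirectedOrder ι]
    [Nonempty ι] [DivisionRing K] [AddCommGroup V] [Module K V] {S : Submodule K V}
    [FiniteDimensional K S] {T : ι → Submodule K V} (hT : Antitone T) (hTS : ∀ i, T i ≤ S) :
    ∃ i₀, ∀ i, T i₀ ≤ T i := by
  have (i : ι) : FiniteDimensional K (T i) := Submodule.finiteDimensional_of_le (hTS i)
  set i₀ := argmin fun i => Module.finrank K (T i)
  refine ⟨i₀, fun i => ?_⟩
  obtain ⟨j, hi₀j, hij⟩ := directed_of (· ≤ ·) i₀ i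
  have : T j = T i₀ :=
    Submodule.eq_of_le_of_finrank_le (hT hi₀j) (argmin_le (fun i => Module.finrank K (T i)) j)
  exact this ▸ hT hij

lemma vanishOn_eq_ker (s : Set ℤ) :
    vanishOn s = LinearMap.ker (LinearMap.funLeft ℂ ℂ ((↑) : s → ℤ)) := by
  ext x
  simp [vanishOn, funext_iff]

lemma not_finiteDimensional_inf_vanishOn_s10 {V : Submodule ℂ (ℤ → ℂ)} {s : Set ℤ} (hs : s.Finite)
    (hV : ¬ FiniteDimensional ℂ V) : ¬ FiniteDimensional ℂ ↥(V ⊓ vanishOn s) := by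
  have : Finite s := hs
  simp only [← Submodule.fg_iff_finiteDimensional, vanishOn_eq_ker] at hV ⊢
  exact fun h => hV (Submodule.fg_of_fg_map_of_fg_inf_ker _ (IsNoetherian.noetherian _) h)

lemma not_finiteDimensional_inf_vanishOn_Iio {V : Submodule ℂ (ℤ → ℂ)} {q : ℤ}
    (h : ¬ FiniteDimensional ℂ ↥(V ⊓ vanishOn (Iio q))) (Q : ℤ) :
    ¬ FiniteDimensional ℂ ↥(V ⊓ vanishOn (Iio Q)) := by
  have hle : V ⊓ vanishOn (Iio q) ⊓ vanishOn (Ico q Q) ≤ V ⊓ vanishOn (Iio Q) := by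
    rintro x ⟨⟨hx, hxq⟩, hxQ⟩
    refine ⟨hx, fun n hn => ?_⟩
    by_cases hnq : n < q
    · exact hxq n hnq
    · exact hxQ n ⟨not_lt.mp hnq, hn⟩
  exact fun hfd => not_finiteDimensional_inf_vanishOn_s10 (finite_Ico q Q) h
    (Submodule.finiteDimensional_of_le hle)

lemma inf_vanishOn_ne_bot_of_card_lt_finrank {V : Submodule ℂ (ℤ → ℂ)} [FiniteDimensional ℂ V]
    (s : Finset ℤ) (hs : s.card < Module.finrank ℂ V) : V ⊓ vanishOn s ≠ ⊥ := by
  let f : V →ₗ[ℂ] (s → ℂ) := (LinearMap.funLeft ℂ ℂ ((↑) : s → ℤ)).comp V.subtype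
  obtain ⟨y, hy, hy0⟩ := (Submodule.ne_bot_iff _).mp
    (LinearMap.ker_ne_bot_of_finrank_lt (f := f) (by simpa using hs))
  refine (Submodule.ne_bot_iff _).mpr ⟨y, ⟨y.2, fun n hn => ?_⟩, by simpa using hy0⟩
  exact congrFun (LinearMap.mem_ker.mp hy) ⟨n, hn⟩

def IsGap (x : ℤ → ℂ) (i j : ℤ) : Prop :=
  x i ≠ 0 ∧ x j ≠ 0 ∧ i < j ∧ ∀ k, i < k → k < j → x k = 0

lemma IsGap.right_unique {x : ℤ → ℂ} {i j j' : ℤ} (h : IsGap x i j) (h' : IsGap x i j') :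
    j = j' := by
  obtain ⟨-, hj, hij, hz⟩ := h
  obtain ⟨-, hj', hij', hz'⟩ := h'
  by_contra hne
  rcases lt_or_gt_of_ne hne with hlt | hlt
  · exact hj (hz' j hij hlt)
  · exact hj' (hz j' hij' hlt)

lemma Lacunary.infinite_setOf_isGap {x : ℤ → ℂ} (hx : Lacunary x) (L : ℤ) :
    {p : ℤ × ℤ | IsGap x p.1 p.2 ∧ L < p.2 - p.1}.Infinite := by
  intro hfin
  obtain ⟨b, hb⟩ := (hfin.image fun p => p.2 - p.1).bddAbove
  obtain ⟨i, j, hi, hj, hij, hlen, hz⟩ := hx (max b L)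
  have : j - i ≤ b := hb ⟨(i, j), ⟨⟨hi, hj, hij, hz⟩, by omega⟩, rfl⟩
  omega

lemma lacunary_of_forall_exists_zero_window {x : ℤ → ℂ}
    (h : ∀ L : ℕ, ∃ i p j, x i ≠ 0 ∧ x j ≠ 0 ∧ i < p ∧ p + L ≤ j ∧ ∀ k ∈ Ico p (p + L), x k = 0) :
    Lacunary x := by
  intro L
  obtain ⟨i, p, j, hi, hj, hip, hpj, hz⟩ := h L.toNat
  obtain ⟨i', ⟨hi'p, hi'⟩, hi'max⟩ := Int.exists_greatest_of_bdd
    (P := fun n => n < p ∧ x n ≠ 0) ⟨p, fun n hn => hn.1.le⟩ ⟨i, hip, hi⟩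
  obtain ⟨j', ⟨hj'p, hj'⟩, hj'min⟩ := Int.exists_least_of_bdd
    (P := fun n => p + L.toNat ≤ n ∧ x n ≠ 0) ⟨p + L.toNat, fun n hn => hn.1⟩ ⟨j, hpj, hj⟩
  refine ⟨i', j', hi', hj', by omega, by omega, fun k hik hkj => ?_⟩
  by_contra hk
  by_cases hkp : k < p
  · exact absurd (hi'max k ⟨hkp, hk⟩) (not_le.mpr hik)
  by_cases hkL : k < p + L.toNat
  · exact hk (hz k ⟨not_lt.mp hkp, hkL⟩)
  · exact absurd (hj'min k ⟨not_lt.mp hkL, hk⟩) (not_le.mpr hkj)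

lemma Lacunary.comp_neg {x : ℤ → ℂ} (hx : Lacunary x) : Lacunary fun n => x (-n) := by
  intro L
  obtain ⟨i, j, hi, hj, hij, hL, hz⟩ := hx L
  refine ⟨-j, -i, by simpa using hj, by simpa using hi, by omega, by omega, fun k hk₁ hk₂ => ?_⟩
  simpa using hz (-k) (by omega) (by omega)

/-- The coefficients of the equation satisfied by `n ↦ x (-n)`: its equation at `n` is the one
of `x` at `-n - r`, read backwards. -/
def reflectCoeff (r : ℕ) (a : ℕ → ℤ → ℂ) : ℕ → ℤ → ℂ := fun k n => a (r - k) (-n - r)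

section Solutions

variable {r : ℕ} {a : ℕ → ℤ → ℂ}

lemma isSol_of_locally_eq {x : ℤ → ℂ}
    (h : ∀ n, ∃ y, IsSol r a y ∧ ∀ k ≤ r, x (n + k) = y (n + k)) : IsSol r a x := by
  intro n
  obtain ⟨y, hy, hxy⟩ := h n
  rw [← hy n]
  refine Finset.sum_congr rfl fun k hk => ?_
  rw [hxy k (Nat.lt_succ_iff.mp (Finset.mem_range.mp hk))]

lemma IsSol.indicator_Iio {x : ℤ → ℂ} (hx : IsSol r a x) {p : ℤ}
    (hp : ∀ n ∈ Ico p (p + r), x n = 0) : IsSol r a ((Iio p).indicator x) := by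
  refine isSol_of_locally_eq fun n => ?_
  by_cases hn : n < p
  · refine ⟨x, hx, fun k hk => ?_⟩
    by_cases hnk : n + k < p
    · exact indicator_of_mem (show n + k ∈ Iio p from hnk) x
    · rw [indicator_of_notMem (show n + k ∉ Iio p from hnk), hp _ ⟨not_lt.mp hnk, by omega⟩]
  · exact ⟨0, (solSpace r a).zero_mem, fun k _ => indicator_of_notMem (by simp; omega) x⟩

lemma sum_reflectCoeff (x : ℤ → ℂ) (n : ℤ) :
    ∑ k ∈ Finset.range (r + 1), reflectCoeff r a k n * x (-(n + k)) =
      ∑ k ∈ Finset.range (r + 1), a k (-n - r) * x (-n - r + k) := by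
  rw [← Finset.sum_range_reflect]
  refine Finset.sum_congr rfl fun k hk => ?_
  have hk : k ≤ r := Nat.lt_succ_iff.mp (Finset.mem_range.mp hk)
  simp only [reflectCoeff, Nat.add_sub_cancel, Nat.sub_sub_self hk]
  congr 2
  push_cast [hk]
  ring

lemma isSol_reflectCoeff_iff {x : ℤ → ℂ} :
    IsSol r (reflectCoeff r a) (fun n => x (-n)) ↔ IsSol r a x := by
  simp only [IsSol, sum_reflectCoeff]
  refine ⟨fun h n => ?_, fun h n => h _⟩
  simpa using h (-n - r)

theorem Lacunary.not_finiteDimensional_solSpace {x : ℤ → ℂ} (hlac : Lacunary x)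
    (hx : IsSol r a x) : ¬ FiniteDimensional ℂ (solSpace r a) := by
  set T := {p : ℤ × ℤ | IsGap x p.1 p.2 ∧ (r : ℤ) < p.2 - p.1}
  have : Infinite T := (hlac.infinite_setOf_isGap r).to_subtype
  have hsol (p : T) : IsSol r a ((Iio (p.1.1 + 1)).indicator x) :=
    hx.indicator_Iio fun n hn => p.2.1.2.2.2 n (by grind) (by grind)
  let v : T → solSpace r a := fun p => ⟨_, hsol p⟩
  have hv : LinearIndependent ℂ v := by
    refine LinearIndependent.of_comp (solSpace r a).subtype ?_
    refine linearIndependent_of_isGreatest_support (top := fun p : T => p.1.1) ?_ fun p => ?_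
    · intro p q h
      have hq : IsGap x p.1.1 q.1.2 := by simpa only [h] using q.2.1
      exact Subtype.ext (Prod.ext h (p.2.1.right_unique hq))
    · refine ⟨by simpa [v] using p.2.1.1, fun n hn => ?_⟩
      by_contra! hlt
      exact hn (indicator_of_notMem (by simp; omega) x)
  exact fun hfd => Module.Finite.not_linearIndependent_of_infinite v hv

lemma not_finiteDimensional_inf_vanishOn_Ici_or_Iio
    (h : ¬ FiniteDimensional ℂ (solSpace r a)) :
    ¬ FiniteDimensional ℂ ↥(solSpace r a ⊓ vanishOn (Ici 0)) ∨
      ¬ FiniteDimensional ℂ ↥(solSpace r a ⊓ vanishOn (Iio r)) := by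
  have hK := not_finiteDimensional_inf_vanishOn_s10 (finite_Ico 0 (r : ℤ)) h
  have hle : solSpace r a ⊓ vanishOn (Ico 0 r) ≤
      solSpace r a ⊓ vanishOn (Ici 0) ⊔ solSpace r a ⊓ vanishOn (Iio r) := by
    rintro x ⟨hx, hx0⟩
    have hlow : IsSol r a ((Iio 0).indicator x) :=
      hx.indicator_Iio fun n hn => hx0 n (by simpa using hn)
    refine Submodule.mem_sup.mpr ⟨_, ⟨hlow, fun n hn => ?_⟩, x - (Iio 0).indicator x,
      ⟨(solSpace r a).sub_mem hx hlow, fun n hn => ?_⟩, add_sub_cancel _ _⟩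
    · exact indicator_of_notMem (s := Iio 0) (by simpa using hn) x
    · by_cases hn0 : n < 0
      · simp [indicator_of_mem (show n ∈ Iio 0 from hn0)]
      · simp [indicator_of_notMem (show n ∉ Iio 0 from hn0), hx0 n ⟨not_lt.mp hn0, hn⟩]
  by_contra! hfd
  obtain ⟨_, _⟩ := hfd
  exact hK (Submodule.finiteDimensional_of_le hle)

lemma inf_vanishOn_Ico_le_vanishOn_Iio {Q N : ℤ}
    (h : ∀ w, IsSol r a w → support w ⊆ Ico Q N → w = 0) :
    solSpace r a ⊓ vanishOn (Iio Q) ⊓ vanishOn (Ico N (N + r)) ≤ vanishOn (Iio (N + r)) := by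
  rintro y ⟨⟨hy, hyQ⟩, hwin⟩ n hn
  have htrunc : (Iio N).indicator y = 0 := by
    refine h _ (hy.indicator_Iio hwin) fun m hm => ?_
    have hmN : m < N := by by_contra hmN; exact hm (indicator_of_notMem (s := Iio N) hmN y)
    exact ⟨not_lt.mp fun hmQ => hm (by simp [hyQ m hmQ]), hmN⟩
  by_cases hnN : n < N
  · simpa [indicator_of_mem (show n ∈ Iio N from hnN)] using congrFun htrunc n
  · exact hwin n ⟨not_lt.mp hnN, hn⟩

lemma exists_isSol_ne_zero_support_subset_Ico {Q : ℤ}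
    (h : ¬ FiniteDimensional ℂ ↥(solSpace r a ⊓ vanishOn (Iio Q))) :
    ∃ w, IsSol r a w ∧ w ≠ 0 ∧ ∃ B, support w ⊆ Ico Q B := by
  by_contra! hno
  set V := solSpace r a ⊓ vanishOn (Iio Q)
  obtain ⟨u, hu⟩ := exists_linearIndependent_of_le_rank (R := ℂ) (M := V) (n := r + 1)
    (Cardinal.natCast_lt_aleph0.le.trans (not_lt.mp (Module.rank_lt_aleph0_iff.not.mpr h)))
  set S := Submodule.span ℂ (range (V.subtype ∘ u))
  have : FiniteDimensional ℂ S := FiniteDimensional.span_of_finite ℂ (finite_range _)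
  have hSV : S ≤ V := Submodule.span_le.mpr (range_subset_iff.mpr fun i => (u i).2)
  have hS : Module.finrank ℂ S = r + 1 :=
    (finrank_span_eq_card (hu.map' V.subtype (Submodule.ker_subtype V))).trans (Fintype.card_fin _)
  have hwindow (N : ℤ) : V ⊓ vanishOn (Ico N (N + r)) ≤ vanishOn (Iio (N + r)) :=
    inf_vanishOn_Ico_le_vanishOn_Iio fun w hw hsupp =>
      not_ne_iff.mp fun hw0 => hno w hw hw0 N hsupp
  have hT (N : ℤ) : S ⊓ vanishOn (Iio N) ≠ ⊥ := by
    refine ne_bot_of_le_ne_bot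
      (inf_vanishOn_ne_bot_of_card_lt_finrank (V := S) (Finset.Ico N (N + r)) (by simp [hS])) ?_
    rintro y ⟨hyS, hy⟩
    exact ⟨hyS, fun n hn => hwindow N ⟨hSV hyS, by simpa using hy⟩ n (by simp at hn ⊢; omega)⟩
  obtain ⟨N₀, hN₀⟩ := Submodule.exists_forall_le_of_antitone (S := S)
    (T := fun N => S ⊓ vanishOn (Iio N))
    (fun _ _ hMN => inf_le_inf_left _ fun y hy n hn => hy n (lt_of_lt_of_le hn hMN))
    fun _ => inf_le_left
  obtain ⟨y, hy, hy0⟩ := (Submodule.ne_bot_iff _).mp (hT N₀)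
  exact hy0 (funext fun n => (hN₀ (n + 1) hy).2 n (by simp))

section Gluing

variable {w : ℕ → ℤ → ℂ} {Q : ℕ → ℤ} (hQ : Monotone Q)
  (hw : ∀ m n, w m n ≠ 0 → Q m ≤ n ∧ n + r + m < Q (m + 1))
include hQ hw

lemma add_lt_of_ne_zero_of_lt {m m' : ℕ} {n n' : ℤ} (hn : w m n ≠ 0) (hn' : w m' n' ≠ 0)
    (hmm' : m < m') : n + r + m < n' := by
  have : Q (m + 1) ≤ Q m' := hQ hmm'
  have := hw m n hn
  have := hw m' n' hn'
  omega

lemma tsum_eq_of_ne_zero_of_near {m : ℕ} {n n' : ℤ} (hn : w m n ≠ 0) (h₁ : n ≤ n' + r)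
    (h₂ : n' ≤ n + r) : ∑' m', w m' n' = w m n' := by
  refine tsum_eq_single m fun m' hm' => ?_
  by_contra hn'
  rcases lt_or_gt_of_ne hm' with hlt | hlt
  · have := add_lt_of_ne_zero_of_lt hQ hw hn' hn hlt
    omega
  · have := add_lt_of_ne_zero_of_lt hQ hw hn hn' hlt
    omega

lemma isSol_tsum (hsol : ∀ m, IsSol r a (w m)) : IsSol r a fun n => ∑' m, w m n := by
  refine isSol_of_locally_eq fun n => ?_
  by_cases h : ∃ k ≤ r, ∃ m, w m (n + k) ≠ 0
  · obtain ⟨k, hk, m, hm⟩ := h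
    exact ⟨w m, hsol m, fun k' hk' => tsum_eq_of_ne_zero_of_near hQ hw hm (by omega) (by omega)⟩
  · push Not at h
    exact ⟨0, (solSpace r a).zero_mem, fun k hk => by simp [h k hk]⟩

lemma lacunary_tsum (hne : ∀ m, w m ≠ 0) : Lacunary fun n => ∑' m, w m n := by
  refine lacunary_of_forall_exists_zero_window fun m => ?_
  obtain ⟨i, hi⟩ := Function.ne_iff.mp (hne m)
  obtain ⟨j, hj⟩ := Function.ne_iff.mp (hne (m + 1))
  have hi' := hw m i hi
  have hj' := hw (m + 1) j hj
  refine ⟨i, Q (m + 1) - m, j, ?_, ?_, by omega, by omega, fun k hk => ?_⟩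
  · rwa [tsum_eq_of_ne_zero_of_near hQ hw hi (by omega) (by omega)]
  · rwa [tsum_eq_of_ne_zero_of_near hQ hw hj (by omega) (by omega)]
  by_contra hk0
  obtain ⟨m', hm'⟩ : ∃ m', w m' k ≠ 0 := by
    by_contra! h
    simp [h] at hk0
  have := hw m' k hm'
  rw [mem_Ico] at hk
  rcases lt_trichotomy m' m with hlt | rfl | hlt
  · have := add_lt_of_ne_zero_of_lt hQ hw hm' hi hlt
    omega
  · omega
  · have : Q (m + 1) ≤ Q m' := hQ hlt
    omega

end Gluing

lemma exists_lacunary_of_forall_exists_support_subset_Ico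
    (h : ∀ Q, ∃ w, IsSol r a w ∧ w ≠ 0 ∧ ∃ B, support w ⊆ Ico Q B) :
    ∃ x, IsSol r a x ∧ Lacunary x := by
  choose w hsol hne B hB using h
  -- the `m`-th piece starts `r + m` places after the support of the previous one ends
  let Q : ℕ → ℤ := fun m => Nat.rec 0 (fun m q => B q + r + m) m
  have hw : ∀ m n, w (Q m) n ≠ 0 → Q m ≤ n ∧ n + r + m < Q (m + 1) := fun m n hn => by
    obtain ⟨h₁, h₂⟩ := hB (Q m) hn
    exact ⟨h₁, show n + r + m < B (Q m) + r + m by omega⟩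
  have hQ : Monotone Q := monotone_nat_of_le_succ fun m => by
    obtain ⟨n, hn⟩ := Function.ne_iff.mp (hne (Q m))
    have := hw m n hn
    omega
  exact ⟨_, isSol_tsum hQ hw fun m => hsol (Q m), lacunary_tsum hQ hw fun m => hne (Q m)⟩

lemma exists_lacunary_of_not_finiteDimensional_inf_vanishOn_Iio {q : ℤ}
    (h : ¬ FiniteDimensional ℂ ↥(solSpace r a ⊓ vanishOn (Iio q))) :
    ∃ x, IsSol r a x ∧ Lacunary x :=
  exists_lacunary_of_forall_exists_support_subset_Ico fun Q =>
    exists_isSol_ne_zero_support_subset_Ico (not_finiteDimensional_inf_vanishOn_Iio h Q)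

lemma exists_lacunary_of_not_finiteDimensional_inf_vanishOn_Ici
    (h : ¬ FiniteDimensional ℂ ↥(solSpace r a ⊓ vanishOn (Ici 0))) :
    ∃ x, IsSol r a x ∧ Lacunary x := by
  let e := LinearEquiv.funCongrLeft ℂ ℂ (Equiv.neg ℤ)
  have hle : (solSpace r a ⊓ vanishOn (Ici 0)).map (e : (ℤ → ℂ) →ₗ[ℂ] (ℤ → ℂ)) ≤
      solSpace r (reflectCoeff r a) ⊓ vanishOn (Iio 1) := by
    rintro _ ⟨x, ⟨hx, hx0⟩, rfl⟩
    exact ⟨isSol_reflectCoeff_iff.mpr hx, fun n hn => hx0 (-n) (by simp at hn ⊢; omega)⟩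
  have hrefl : ¬ FiniteDimensional ℂ ↥(solSpace r (reflectCoeff r a) ⊓ vanishOn (Iio 1)) :=
    fun hfd => h (have := Submodule.finiteDimensional_of_le hle
      (e.submoduleMap _).symm.finiteDimensional)
  obtain ⟨y, hy, hlac⟩ := exists_lacunary_of_not_finiteDimensional_inf_vanishOn_Iio hrefl
  exact ⟨fun n => y (-n), isSol_reflectCoeff_iff.mp (by simpa using hy), hlac.comp_neg⟩

end Solutions

theorem main_criterion_general (r : ℕ) (a : ℕ → ℤ → ℂ) :
    ¬ FiniteDimensional ℂ (solSpace r a) ↔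
      ∃ x : ℤ → ℂ, IsSol r a x ∧ Lacunary x := by
  refine ⟨fun h => ?_, fun ⟨x, hx, hlac⟩ => hlac.not_finiteDimensional_solSpace hx⟩
  rcases not_finiteDimensional_inf_vanishOn_Ici_or_Iio h with h | h
  · exact exists_lacunary_of_not_finiteDimensional_inf_vanishOn_Ici h
  · exact exists_lacunary_of_not_finiteDimensional_inf_vanishOn_Iio h

/-- Main theorem -/
theorem main_criterion (r : ℕ) (hr : 1 ≤ r) (a : ℕ → ℤ → ℂ) :
    ¬ FiniteDimensional ℂ (solSpace r a) ↔
      ∃ x : ℤ → ℂ, IsSol r a x ∧ Lacunary x :=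
  main_criterion_general r a
end

section
/- Let r ≥ 1 and let c_0,...,c_r : ℤ → ℂ satisfy c_k(n) = 0 whenever (r+1) ∤ (n+k). Then the sequence l : ℤ → ℂ defined by l(n) = 1 if n = 2^m(r+1) + 1 for some m ≥ 0, and l(n) = 0 otherwise, is a lacunary solution of Σ_{k=0}^r c_k(n) l(n+k) = 0 for all n ∈ ℤ. -/
/-! Every term `c k n * l (n + k)` vanishes: either `r + 1 ∤ n + k`, so `c k n = 0`, or
`r + 1 ∣ n + k`, and then `l (n + k) = 0` because the support of `l` is `≡ 1 [ZMOD r + 1]`.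
The support `{2 ^ m (r + 1) + 1}` is lacunary since its consecutive gaps `2 ^ m (r + 1)` are
unbounded. -/

theorem isSol_of_forall_dvd_eq_zero {r : ℕ} {c : ℕ → ℤ → ℂ} {x : ℤ → ℂ} (d : ℤ)
    (hc : ∀ k ≤ r, ∀ n : ℤ, ¬ d ∣ n + k → c k n = 0) (hx : ∀ n, d ∣ n → x n = 0) :
    IsSol r c x := by
  intro n
  refine Finset.sum_eq_zero fun k hk => ?_
  by_cases hdvd : d ∣ n + k
  · rw [hx _ hdvd, mul_zero]
  · rw [hc k (Nat.lt_succ_iff.mp (Finset.mem_range.mp hk)) n hdvd, zero_mul]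

theorem lacunary_of_support_eq_range {x : ℤ → ℂ} {f : ℕ → ℤ} (hf : StrictMono f)
    (hsupp : ∀ n, x n ≠ 0 ↔ ∃ m, n = f m) (hgap : ∀ L : ℤ, ∃ m, L < f (m + 1) - f m) :
    Lacunary x := by
  intro L
  obtain ⟨m, hm⟩ := hgap L
  refine ⟨f m, f (m + 1), (hsupp _).2 ⟨m, rfl⟩, (hsupp _).2 ⟨m + 1, rfl⟩,
    hf (Nat.lt_succ_self m), hm, fun k hmk hkm => ?_⟩
  by_contra hk
  obtain ⟨t, rfl⟩ := (hsupp k).1 hk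
  have := hf.lt_iff_lt.1 hmk
  have := hf.lt_iff_lt.1 hkm
  omega

theorem not_dvd_pow_two_mul_add_one {d : ℤ} (hd : 1 < d) (m : ℕ) : ¬ d ∣ 2 ^ m * d + 1 := by
  intro h
  have := Int.eq_one_of_dvd_one (by omega) ((Int.dvd_add_right (dvd_mul_left d _)).1 h)
  omega

theorem strictMono_pow_two_mul_add_one {d : ℤ} (hd : 0 < d) :
    StrictMono fun m : ℕ => 2 ^ m * d + 1 :=
  strictMono_nat_of_lt_succ fun m => by
    simp only [pow_succ]
    nlinarith [pow_pos (two_pos : (0 : ℤ) < 2) m]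

theorem exists_lt_pow_two_mul_gap {d : ℤ} (hd : 0 < d) (L : ℤ) :
    ∃ m : ℕ, L < (2 ^ (m + 1) * d + 1) - (2 ^ m * d + 1) := by
  refine ⟨L.toNat, ?_⟩
  have hpow : (L.toNat : ℤ) < 2 ^ L.toNat := by exact_mod_cast Nat.lt_two_pow_self
  rw [pow_succ]
  nlinarith [Int.self_le_toNat L, pow_pos (two_pos : (0 : ℤ) < 2) L.toNat]

open scoped Classical in
theorem example_lacunary_solution (r : ℕ) (hr : 1 ≤ r) (c : ℕ → ℤ → ℂ)
    (hc : ∀ k ≤ r, ∀ n : ℤ, ¬ ((r : ℤ) + 1 ∣ n + k) → c k n = 0) :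
    IsSol r c (fun n => if ∃ m : ℕ, n = 2 ^ m * ((r : ℤ) + 1) + 1 then 1 else 0) ∧
    Lacunary (fun n => if ∃ m : ℕ, n = 2 ^ m * ((r : ℤ) + 1) + 1 then 1 else 0) := by
  have hd : (1 : ℤ) < r + 1 := by omega
  have hd' : (0 : ℤ) < r + 1 := by omega
  refine ⟨isSol_of_forall_dvd_eq_zero _ hc fun n hn => ?_,
    lacunary_of_support_eq_range (strictMono_pow_two_mul_add_one hd') (by simp)
      (exists_lt_pow_two_mul_gap hd')⟩
  rw [if_neg]
  rintro ⟨m, rfl⟩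
  exact not_dvd_pow_two_mul_add_one hd m hn
end
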